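/- If a real Banach space V is 𝒦-analytic in its weak topology (weakly 𝒦-analytic) and the density character of V is less than 𝔟, then V is weakly compactly generated. -/
import Mathlib


open Set Topology Cardinal

/-- A map `f : X × X → ℝ` fragments the topological space `X` if for every nonempty
subset `L` of `X` and every `ε > 0` there is a nonempty relatively open subset of `L`
of `f`-diameter less than `ε`. -/
def Fragments {X : Type*} [TopologicalSpace X] (f : X → X → ℝ) : Prop :=
  ∀ L : Set X, L.Nonempty → ∀ ε : ℝ, 0 < ε →
    ∃ V : Set X, IsOpen V ∧ (V ∩ L).Nonempty ∧
      ∀ x ∈ V ∩ L, ∀ y ∈ V ∩ L, f x y < ε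

/-- `f` (defined on the ambient space `X`) fragments the subset `K`. -/
def FragmentsOn {X : Type*} [TopologicalSpace X] (f : X → X → ℝ) (K : Set X) : Prop :=
  ∀ L : Set X, L ⊆ K → L.Nonempty → ∀ ε : ℝ, 0 < ε →
    ∃ V : Set X, IsOpen V ∧ (V ∩ L).Nonempty ∧
      ∀ x ∈ V ∩ L, ∀ y ∈ V ∩ L, f x y < ε

/-- A quasi metric: nonnegative, symmetric, and vanishing exactly on the diagonal. -/
def IsQuasiMetric {X : Type*} (f : X → X → ℝ) : Prop :=
  (∀ x y, 0 ≤ f x y) ∧ (∀ x y, f x y = f y x) ∧ (∀ x y, f x y = 0 ↔ x = y)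

/-- A metric (as a two-variable real function): symmetric, vanishing exactly on the
diagonal, and satisfying the triangle inequality. -/
def IsMetricFun {X : Type*} (d : X → X → ℝ) : Prop :=
  (∀ x y, d x y = d y x) ∧ (∀ x y, d x y = 0 ↔ x = y) ∧
    (∀ x y z, d x z ≤ d x y + d y z)

/-- Lower semicontinuity of a two-variable map for the product topology. -/
def LSC {X : Type*} [TopologicalSpace X] (f : X → X → ℝ) : Prop :=
  LowerSemicontinuous (fun p : X × X => f p.1 p.2)

/-- A subset of `ℕ → ℕ` is σ-bounded (for the pointwise order) if it is a countable
union of order-bounded sets. -/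
def SigmaBounded (S : Set (ℕ → ℕ)) : Prop :=
  ∃ B : ℕ → Set (ℕ → ℕ), S ⊆ (⋃ n, B n) ∧ ∀ n, ∃ τ : ℕ → ℕ, ∀ σ ∈ B n, σ ≤ τ

/-- The cardinal `𝔟`: the least cardinality of a subset of `ℕ → ℕ` which is not
σ-bounded for the pointwise order. -/
noncomputable def cardinalB : Cardinal :=
  sInf { c | ∃ S : Set (ℕ → ℕ), ¬ SigmaBounded S ∧ #S = c }

/-- The density character of a topological space: the least cardinality of a dense subset. -/
noncomputable def densChar (V : Type u) [TopologicalSpace V] : Cardinal.{u} :=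
  sInf { c | ∃ s : Set V, Dense s ∧ #s = c }

/-- The closed unit ball of the dual of `V`, carrying the weak* topology. -/
def dualBall (V : Type u) [NormedAddCommGroup V] [NormedSpace ℝ V] : Set (WeakDual ℝ V) :=
  {φ : WeakDual ℝ V | ∀ x : V, |φ x| ≤ ‖x‖}

/-- The pseudometric `d_M` on the dual unit ball induced by a set `M ⊆ V`:
`d_M(x*, y*) = sup_{x ∈ M} |x*(x) - y*(x)|`. -/
noncomputable def dM {V : Type u} [NormedAddCommGroup V] [NormedSpace ℝ V] (M : Set V)
    (φ ψ : dualBall V) : ℝ :=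
  ⨆ x : M, |(φ : WeakDual ℝ V) x - (ψ : WeakDual ℝ V) x|

/-- `V` is Asplund generated: it is the closed linear span of a bounded set `M` such that
`d_M` fragments the weak* dual unit ball. -/
def AsplundGenerated (V : Type u) [NormedAddCommGroup V] [NormedSpace ℝ V] : Prop :=
  ∃ M : Set V, Bornology.IsBounded M ∧
    (Submodule.span ℝ M).topologicalClosure = ⊤ ∧
    Fragments (dM M)

/-- A subset of a normed space is weakly compact if it is compact in the weak topology. -/
def WeaklyCompact {V : Type u} [NormedAddCommGroup V] [NormedSpace ℝ V] (M : Set V) : Prop :=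
  IsCompact ((toWeakSpace ℝ V) '' M)

/-- A Banach space is weakly compactly generated (WCG) if it is the closed linear span
of a weakly compact subset. -/
def IsWCG (V : Type u) [NormedAddCommGroup V] [NormedSpace ℝ V] : Prop :=
  ∃ M : Set V, WeaklyCompact M ∧ (Submodule.span ℝ M).topologicalClosure = ⊤

/-- A topological space is `𝒦`-analytic if it admits an usco `φ : ℕ^ℕ → 2^X` with
compact values whose union is all of `X`. -/
def KAnalytic (X : Type*) [TopologicalSpace X] : Prop :=
  ∃ φ : (ℕ → ℕ) → Set X,
    (∀ σ, IsCompact (φ σ)) ∧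
    (∀ U : Set X, IsOpen U → IsOpen {σ : ℕ → ℕ | φ σ ⊆ U}) ∧
    (⋃ σ, φ σ) = Set.univ


open scoped Pointwise


lemma usco_biUnion_compact {X : Type*} [TopologicalSpace X] {φ : (ℕ → ℕ) → Set X}
    (hc : ∀ σ, IsCompact (φ σ)) (ho : ∀ U : Set X, IsOpen U → IsOpen {σ | φ σ ⊆ U})
    {C : Set (ℕ → ℕ)} (hC : IsCompact C) : IsCompact (⋃ σ ∈ C, φ σ) := by
  classical
  refine isCompact_of_finite_subcover ?_
  intro ι U hU hcover
  have key : ∀ σ ∈ C, ∃ t : Finset ι, φ σ ⊆ ⋃ i ∈ t, U i := by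
    intro σ hσ
    exact (hc σ).elim_finite_subcover U hU ((subset_biUnion_of_mem hσ).trans hcover)
  choose! t ht using key
  have hCcov : C ⊆ ⋃ σ : C, {σ' | φ σ' ⊆ ⋃ i ∈ t σ, U i} := by
    intro σ hσ
    exact mem_iUnion.2 ⟨⟨σ, hσ⟩, ht σ hσ⟩
  obtain ⟨s, hs⟩ := hC.elim_finite_subcover _
    (fun σ : C => ho _ (isOpen_biUnion fun i _ => hU i)) hCcov
  refine ⟨s.biUnion fun σ => t σ, ?_⟩
  intro x hx
  obtain ⟨σ, hσC, hxσ⟩ := mem_iUnion₂.1 hx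
  obtain ⟨σ₀, hσ₀s, hσmem⟩ := mem_iUnion₂.1 (hs hσC)
  obtain ⟨i, hi, hxi⟩ := mem_iUnion₂.1 (hσmem hxσ)
  exact mem_iUnion₂.2 ⟨i, Finset.mem_biUnion.2 ⟨σ₀, hσ₀s, hi⟩, hxi⟩

lemma compact_le_tau (τ : ℕ → ℕ) : IsCompact {σ : ℕ → ℕ | σ ≤ τ} := by
  have h : {σ : ℕ → ℕ | σ ≤ τ} = Set.pi univ (fun n => Set.Iic (τ n)) := by
    ext σ; simp [Pi.le_def, Set.mem_pi]
  rw [h]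
  exact isCompact_univ_pi fun n => (Set.finite_Iic _).isCompact

lemma weakCompact_norm_bdd {V : Type u} [NormedAddCommGroup V] [NormedSpace ℝ V]
    [CompleteSpace V] (K : Set V) (h : IsCompact ((toWeakSpace ℝ V) '' K)) :
    ∃ r : ℝ, 0 ≤ r ∧ ∀ x ∈ K, ‖x‖ ≤ r := by
  have hpt : ∀ f : StrongDual ℝ V, ∃ C, ∀ x : K,
      ‖NormedSpace.inclusionInDoubleDual ℝ V x f‖ ≤ C := by
    intro f
    have hfc : Continuous fun y : WeakSpace ℝ V => (topDualPairing ℝ V).flip y f :=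
      WeakBilin.eval_continuous _ f
    have hcpt : IsCompact ((fun y : WeakSpace ℝ V => (topDualPairing ℝ V).flip y f) ''
        ((toWeakSpace ℝ V) '' K)) := h.image hfc
    obtain ⟨C, hC⟩ := isBounded_iff_forall_norm_le.1 hcpt.isBounded
    exact ⟨C, fun x => hC _ ⟨toWeakSpace ℝ V x, ⟨x, x.2, rfl⟩, rfl⟩⟩
  obtain ⟨C', hC'⟩ :=
    banach_steinhaus (g := fun x : K => NormedSpace.inclusionInDoubleDual ℝ V x) hpt
  refine ⟨max C' 0, le_max_right _ _, fun x hx => ?_⟩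
  calc ‖x‖ = ‖NormedSpace.inclusionInDoubleDual ℝ V x‖ :=
        ((NormedSpace.inclusionInDoubleDualLi ℝ (E := V)).norm_map x).symm
    _ ≤ C' := hC' ⟨x, hx⟩
    _ ≤ max C' 0 := le_max_left _ _


/-- A weakly `𝒦`-analytic Banach space of density character less than `𝔟` is weakly
compactly generated. -/
theorem statement11 {V : Type u} [NormedAddCommGroup V] [NormedSpace ℝ V] [CompleteSpace V]
    (hKA : KAnalytic (WeakSpace ℝ V))
    (hdens : densChar V < Cardinal.lift.{u} cardinalB) :
    IsWCG V := by
  classical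
  haveI : ContinuousSMul ℝ (WeakSpace ℝ V) := WeakBilin.instContinuousSMul ((topDualPairing ℝ V).flip)
  obtain ⟨φ, hφc, hφo, hφu⟩ := hKA
  set e := toWeakSpace ℝ V with he
  have hne : {c | ∃ s : Set V, Dense s ∧ #s = c}.Nonempty :=
    ⟨#(univ : Set V), univ, dense_univ, rfl⟩
  obtain ⟨D, hD, hDcard⟩ : ∃ D : Set V, Dense D ∧ #D = densChar V := csInf_mem hne
  have hcov : ∀ x : V, ∃ σ, e x ∈ φ σ := by
    intro x
    have : e x ∈ ⋃ σ, φ σ := hφu.symm ▸ Set.mem_univ _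
    exact mem_iUnion.1 this
  choose s hs using hcov
  set S : Set (ℕ → ℕ) := s '' D with hSdef
  have hsurj : Function.Surjective (fun x : D => (⟨s x, mem_image_of_mem s x.2⟩ : S)) := by
    rintro ⟨y, hy⟩
    obtain ⟨x, hx, rfl⟩ := hy
    exact ⟨⟨x, hx⟩, rfl⟩
  have hcard : #S < cardinalB := by
    have h1 : Cardinal.lift.{u} #S ≤ Cardinal.lift.{0} #D :=
      Cardinal.lift_mk_le'.2 ⟨Function.Embedding.ofSurjective _ hsurj⟩
    rw [Cardinal.lift_uzero, hDcard] at h1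
    exact Cardinal.lift_lt.1 (lt_of_le_of_lt h1 hdens)
  have hSb : SigmaBounded S := by
    by_contra hS
    have hmem : #S ∈ {c | ∃ S : Set (ℕ → ℕ), ¬ SigmaBounded S ∧ #S = c} := ⟨S, hS, rfl⟩
    exact absurd (csInf_le (OrderBot.bddBelow _) hmem) (not_le.2 hcard)
  obtain ⟨B, hSB, hBd⟩ := hSb
  choose τ hτ using hBd
  set Kw : ℕ → Set (WeakSpace ℝ V) := fun n => ⋃ σ ∈ {σ | σ ≤ τ n}, φ σ with hKw
  have hKwc : ∀ n, IsCompact (Kw n) := fun n =>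
    usco_biUnion_compact hφc hφo (compact_le_tau (τ n))
  have hDmem : ∀ x ∈ D, ∃ n, e x ∈ Kw n := by
    intro x hx
    have hxS : s x ∈ S := mem_image_of_mem s hx
    obtain ⟨n, hn⟩ := mem_iUnion.1 (hSB hxS)
    exact ⟨n, mem_biUnion (hτ n _ hn) (hs x)⟩
  set A : ℕ → Set V := fun n => e ⁻¹' Kw n with hA
  have himg : ∀ n, e '' A n = Kw n := fun n =>
    Set.image_preimage_eq _ (toWeakSpace ℝ V).surjective
  have hbdd : ∀ n, ∃ r : ℝ, 0 ≤ r ∧ ∀ x ∈ A n, ‖x‖ ≤ r := fun n =>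
    weakCompact_norm_bdd (A n) (by rw [← he, himg n]; exact hKwc n)
  choose r hr0 hrb using hbdd
  set c : ℕ → ℝ := fun n => (1 + r n)⁻¹ * ((2 : ℝ) ^ n)⁻¹ with hc
  have hcpos : ∀ n, 0 < c n := by
    intro n
    have h1 : (0:ℝ) < 1 + r n := by linarith [hr0 n]
    positivity
  set M : Set V := {0} ∪ ⋃ n, c n • A n with hM
  have himgM : e '' M = {0} ∪ ⋃ n, c n • Kw n := by
    rw [hM, Set.image_union, Set.image_iUnion, Set.image_singleton, map_zero]
    congr 1
    refine iUnion_congr fun n => ?_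
    rw [← himg n, ← image_smul_set]
  have hnormle : ∀ n, ∀ x ∈ c n • A n, ‖x‖ ≤ ((2:ℝ) ^ n)⁻¹ := by
    intro n y hy
    obtain ⟨x, hx, rfl⟩ := hy
    have h1 : (0:ℝ) < 1 + r n := by linarith [hr0 n]
    have h2 : ‖x‖ ≤ r n := hrb n x hx
    have h3 : ‖c n • x‖ = c n * ‖x‖ := by
      rw [norm_smul, Real.norm_eq_abs, abs_of_pos (hcpos n)]
    have h4 : (1 + r n)⁻¹ * ‖x‖ ≤ 1 := by
      rw [inv_mul_le_iff₀ h1]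
      linarith [norm_nonneg x]
    rw [h3]
    calc c n * ‖x‖ = ((1 + r n)⁻¹ * ‖x‖) * ((2:ℝ) ^ n)⁻¹ := by rw [hc]; ring
      _ ≤ 1 * ((2:ℝ) ^ n)⁻¹ := mul_le_mul_of_nonneg_right h4 (by positivity)
      _ = ((2:ℝ) ^ n)⁻¹ := one_mul _
  have h0M : (0 : WeakSpace ℝ V) ∈ e '' M := ⟨0, Or.inl rfl, map_zero _⟩
  have hwc : WeaklyCompact M := by
    rw [WeaklyCompact, ← he, isCompact_iff_ultrafilter_le_nhds]
    intro F hF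
    rw [Filter.le_principal_iff] at hF
    by_cases hcase : ∃ n, (c n • Kw n) ∈ F
    · obtain ⟨n, hn⟩ := hcase
      obtain ⟨x, hxmem, hxle⟩ := ((hKwc n).smul (c n)).ultrafilter_le_nhds F
        (Filter.le_principal_iff.2 hn)
      exact ⟨x, by rw [himgM]; exact Or.inr (mem_iUnion.2 ⟨n, hxmem⟩), hxle⟩
    · push_neg at hcase
      refine ⟨0, h0M, fun U hU => ?_⟩
      have hUV : (toWeakSpaceCLM ℝ V) ⁻¹' U ∈ 𝓝 (0 : V) := by
        apply (toWeakSpaceCLM ℝ V).continuous.continuousAt.preimage_mem_nhds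
        rwa [map_zero]
      obtain ⟨ε, hε, hball⟩ := Metric.mem_nhds_iff.1 hUV
      obtain ⟨N, hN⟩ : ∃ N : ℕ, ((2:ℝ) ^ N)⁻¹ < ε := by
        obtain ⟨N, hN⟩ := exists_pow_lt_of_lt_one hε (by norm_num : (1/2 : ℝ) < 1)
        exact ⟨N, by rwa [div_pow, one_pow, one_div] at hN⟩
      have hT : (e '' M) ∩ ⋂ n ∈ Finset.range N, (c n • Kw n)ᶜ ∈ F :=
        Filter.inter_mem hF ((Filter.biInter_finset_mem _).2 fun n _ =>
          (Ultrafilter.compl_mem_iff_notMem).2 (hcase n))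
      refine Filter.mem_of_superset hT ?_
      rintro y ⟨hy1, hy2⟩
      rw [himgM] at hy1
      rcases hy1 with hy0 | hyn
      · rw [mem_singleton_iff] at hy0
        rw [hy0]
        exact mem_of_mem_nhds hU
      · obtain ⟨n, hyn⟩ := mem_iUnion.1 hyn
        rcases lt_or_ge n N with hlt | hge
        · exact absurd hyn (mem_iInter₂.1 hy2 n (Finset.mem_range.2 hlt))
        · rw [← himg n, ← image_smul_set] at hyn
          obtain ⟨x, hx, rfl⟩ := hyn
          have hxn : ‖x‖ < ε := by
            calc ‖x‖ ≤ ((2:ℝ)^n)⁻¹ := hnormle n x hx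
              _ ≤ ((2:ℝ)^N)⁻¹ := by
                  apply inv_anti₀ (by positivity)
                  exact pow_le_pow_right₀ (by norm_num) hge
              _ < ε := hN
          have hxball : x ∈ (toWeakSpaceCLM ℝ V) ⁻¹' U :=
            hball (by simpa [Metric.mem_ball] using hxn)
          simpa [toWeakSpaceCLM_eq_toWeakSpace, ← he] using hxball
  refine ⟨M, hwc, ?_⟩
  rw [← Submodule.dense_iff_topologicalClosure_eq_top]
  refine hD.mono ?_
  intro x hx
  obtain ⟨n, hn⟩ := hDmem x hx
  have hxA : x ∈ A n := hn
  have hmemM : c n • x ∈ M := Or.inr (mem_iUnion.2 ⟨n, smul_mem_smul_set hxA⟩)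
  have : x = (c n)⁻¹ • (c n • x) := (inv_smul_smul₀ (ne_of_gt (hcpos n)) x).symm
  rw [this]
  exact Submodule.smul_mem _ _ (Submodule.subset_span hmemM)
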